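/- arXiv:1408.2089 — 2 statements merged into one kernel-verified Lean document; each statement's English description precedes it below -/
import Mathlib

section
/- Let U ⊆ ℂ be open, p ∈ U, and φ : U \ {p} → ℂ ∪ {∞} holomorphic. If there exists a point q in the Riemann sphere and a neighborhood V of q in the sphere such that φ(U \ {p}) misses a nonempty open subset of the sphere (i.e. φ omits an open set of values near p), then p is a removable singularity or a pole of φ; in particular φ extends to a holomorphic map U → ℂ ∪ {∞}. -/
open Filter Metric Set Topology Bornology

/-!
Since `φ` stays at distance at least `r` from `q`, the function `(φ - q)⁻¹` is bounded by `r⁻¹`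
near `p`, so Riemann's removable singularity theorem extends it to a holomorphic `h` on `U`.
If `h p ≠ 0`, then `q + h⁻¹` is a holomorphic extension of `φ`; if `h p = 0`, then `φ - q`, the
reciprocal of a function tending to `0` through nonzero values, tends to infinity, and so does `φ`.
-/

lemma norm_inv_sub_le_of_notMem_ball {𝕜 : Type*} [NormedDivisionRing 𝕜] {w q : 𝕜} {r : ℝ}
    (hr : 0 < r) (hw : w ∉ ball q r) : ‖(w - q)⁻¹‖ ≤ r⁻¹ := by
  rw [mem_ball, dist_eq_norm, not_lt] at hw
  rw [norm_inv]
  exact inv_anti₀ hr hw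

lemma sub_ne_zero_of_notMem_ball {E : Type*} [SeminormedAddCommGroup E] {w q : E} {r : ℝ}
    (hr : 0 < r) (hw : w ∉ ball q r) : w - q ≠ 0 := fun hwq ↦
  hw (sub_eq_zero.1 hwq ▸ mem_ball_self hr)

lemma tendsto_cobounded_of_tendsto_inv_sub {α 𝕜 : Type*} [NormedField 𝕜] {l : Filter α}
    {f : α → 𝕜} {q : 𝕜} (h : Tendsto (fun z ↦ (f z - q)⁻¹) l (𝓝[≠] 0)) :
    Tendsto f l (cobounded 𝕜) := by
  have hsub : Tendsto (fun z ↦ f z - q) l (cobounded 𝕜) := by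
    simpa only [Function.comp_def, inv_inv] using tendsto_inv₀_nhdsNE_zero.comp h
  simpa only [Function.comp_def, sub_add_cancel] using (tendsto_add_const_cobounded q).comp hsub

lemma ContinuousAt.tendsto_nhdsNE_zero {X 𝕜 : Type*} [TopologicalSpace X] [NormedField 𝕜]
    {h : X → 𝕜} {p : X} (hc : ContinuousAt h p) (h0 : h p = 0)
    (hne : ∀ᶠ z in 𝓝[≠] p, h z ≠ 0) : Tendsto h (𝓝[≠] p) (𝓝[≠] 0) :=
  tendsto_nhdsWithin_iff.2 ⟨h0 ▸ hc.tendsto.mono_left nhdsWithin_le_nhds, hne⟩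

lemma exists_differentiableOn_eqOn_inv_sub_of_notMem_ball {U : Set ℂ} {p : ℂ} (hU : U ∈ 𝓝 p)
    {φ : ℂ → ℂ} (hφ : DifferentiableOn ℂ φ (U \ {p})) {q : ℂ} {r : ℝ} (hr : 0 < r)
    (hmiss : ∀ z ∈ U \ {p}, φ z ∉ ball q r) :
    ∃ h : ℂ → ℂ, DifferentiableOn ℂ h U ∧ EqOn (fun z ↦ (φ z - q)⁻¹) h (U \ {p}) := by
  have hbdd : BddAbove (norm ∘ (fun z ↦ (φ z - q)⁻¹) '' (U \ {p})) :=
    ⟨r⁻¹, forall_mem_image.2 fun z hz ↦ norm_inv_sub_le_of_notMem_ball hr (hmiss z hz)⟩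
  have hψ : DifferentiableOn ℂ (fun z ↦ (φ z - q)⁻¹) (U \ {p}) :=
    (hφ.sub_const q).inv fun z hz ↦ sub_ne_zero_of_notMem_ball hr (hmiss z hz)
  exact ⟨_, Complex.differentiableOn_update_limUnder_of_bddAbove hU hψ hbdd,
    fun z hz ↦ (Function.update_of_ne hz.2 _ (fun z ↦ (φ z - q)⁻¹)).symm⟩

/-- Casorati–Weierstrass type extension: Let `U ⊆ ℂ` be open, `p ∈ U`, and
`φ` holomorphic on `U \ {p}` (as a map to the Riemann sphere; here represented by its
finite values).  If `φ` omits a nonempty open set of values (a ball `B_r(q)` in `ℂ`),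
then `p` is a removable singularity or a pole of `φ`; in particular `φ` extends
holomorphically across `p` as a map to the Riemann sphere. -/
theorem casorati_weierstrass_extension
    (U : Set ℂ) (hU : IsOpen U) (p : ℂ) (hp : p ∈ U)
    (φ : ℂ → ℂ)
    (hφ : DifferentiableOn ℂ φ (U \ {p}))
    (homit : ∃ (q : ℂ) (r : ℝ), 0 < r ∧ ∀ z ∈ U \ {p}, φ z ∉ Metric.ball q r) :
    (∃ g : ℂ → ℂ, DifferentiableOn ℂ g U ∧ Set.EqOn φ g (U \ {p})) ∨
    Filter.Tendsto (fun z => ‖φ z‖) (nhdsWithin p {p}ᶜ) Filter.atTop := by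
  obtain ⟨q, r, hr, hmiss⟩ := homit
  have hUp : U ∈ 𝓝 p := hU.mem_nhds hp
  obtain ⟨h, hh, hφh⟩ := exists_differentiableOn_eqOn_inv_sub_of_notMem_ball hUp hφ hr hmiss
  have hne : ∀ z ∈ U \ {p}, h z ≠ 0 := fun z hz ↦ hφh hz ▸
    inv_ne_zero (sub_ne_zero_of_notMem_ball hr (hmiss z hz))
  have hpunct : ∀ᶠ z in 𝓝[≠] p, z ∈ U \ {p} :=
    inter_mem (mem_nhdsWithin_of_mem_nhds hUp) self_mem_nhdsWithin
  by_cases h0 : h p = 0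
  · right
    rw [tendsto_norm_atTop_iff_cobounded]
    refine tendsto_cobounded_of_tendsto_inv_sub (q := q) ?_
    refine ((hh.differentiableAt hUp).continuousAt.tendsto_nhdsNE_zero h0 ?_).congr' ?_
    · filter_upwards [hpunct] with z hz using hne z hz
    · filter_upwards [hpunct] with z hz using (hφh hz).symm
  · left
    refine ⟨fun z ↦ q + (h z)⁻¹, (hh.inv fun z hz ↦ ?_).const_add q, fun z hz ↦ ?_⟩
    · rcases eq_or_ne z p with rfl | hzp
      exacts [h0, hne z ⟨hz, hzp⟩]
    · simp [← hφh hz]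
end

section
/- Let f : Σ → ℝⁿ \ {0} be a smooth immersion of a surface and let f̃ = I ∘ f with I(x) = x/|x|² the inversion at the unit sphere. Then the mean curvature vectors satisfy H_{f̃} = |f|² (H_f + 4 f^⊥ |f|⁻²) up to the identification of normal bundles via DI, where f^⊥ denotes the component of the position vector f normal to the immersed surface. In particular, if both f and f̃ are minimal (H_f = 0 and H_{f̃} = 0), then f^⊥ ≡ 0. -/
open scoped InnerProductSpace

noncomputable section

/-- The Laplacian of a map `f : ℂ → ℝⁿ` at `p`. -/
def lap {n : ℕ} (f : ℂ → EuclideanSpace ℝ (Fin n)) (p : ℂ) : EuclideanSpace ℝ (Fin n) :=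
  fderiv ℝ (fun q => fderiv ℝ f q 1) p 1
    + fderiv ℝ (fun q => fderiv ℝ f q Complex.I) p Complex.I

/-- The tangent plane of the immersion `f` at `p`, as a subspace of `ℝⁿ`. -/
def tang {n : ℕ} (f : ℂ → EuclideanSpace ℝ (Fin n)) (p : ℂ) :
    Submodule ℝ (EuclideanSpace ℝ (Fin n)) :=
  Submodule.span ℝ {fderiv ℝ f p 1, fderiv ℝ f p Complex.I}

/-- The component of `v ∈ ℝⁿ` normal to the immersed surface at `p`: the orthogonal
projection of `v` onto the orthogonal complement of the tangent plane. -/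
def nproj {n : ℕ} (f : ℂ → EuclideanSpace ℝ (Fin n)) (p : ℂ)
    (v : EuclideanSpace ℝ (Fin n)) : EuclideanSpace ℝ (Fin n) :=
  (Submodule.orthogonalProjectionOnto (tang f p)ᗮ v : EuclideanSpace ℝ (Fin n))

/-- The mean curvature vector of a conformal immersion `f` at `p`:
`H = e^{-2u} (Δf)^⊥` where `e^{2u} = ‖∂_x f‖²`. -/
def meanCurv {n : ℕ} (f : ℂ → EuclideanSpace ℝ (Fin n)) (p : ℂ) :
    EuclideanSpace ℝ (Fin n) :=
  (‖fderiv ℝ f p 1‖ ^ 2)⁻¹ • nproj f p (lap f p)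

section Aux

variable {E : Type*} [NormedAddCommGroup E] [InnerProductSpace ℝ E]
variable {F : Type*} [NormedAddCommGroup F] [NormedSpace ℝ F]

lemma inner_self_ne_zero' {x : E} (hx : x ≠ 0) : ⟪x, x⟫_ℝ ≠ 0 := by
  rw [real_inner_self_eq_norm_sq]
  simpa using pow_ne_zero 2 (norm_ne_zero_iff.mpr hx)

lemma fderiv_inv_smul {f : F → E} {f' : F →L[ℝ] E} {q : F}
    (hf : HasFDerivAt f f' q) (h0 : f q ≠ 0) (w : F) :
    fderiv ℝ (fun z => (⟪f z, f z⟫_ℝ)⁻¹ • f z) q w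
      = (⟪f q, f q⟫_ℝ)⁻¹ • f' w
        - (2 * (⟪f q, f q⟫_ℝ)⁻¹ * (⟪f q, f q⟫_ℝ)⁻¹ * ⟪f q, f' w⟫_ℝ) • f q := by
  have hρ0 : ⟪f q, f q⟫_ℝ ≠ 0 := inner_self_ne_zero' h0
  have h1 : HasFDerivAt (fun z => ⟪f z, f z⟫_ℝ)
      ((fderivInnerCLM ℝ (f q, f q)).comp (f'.prod f')) q := hf.inner ℝ hf
  have h2 : HasFDerivAt (fun z => (⟪f z, f z⟫_ℝ)⁻¹)
      ((ContinuousLinearMap.smulRight 1 (-(⟪f q, f q⟫_ℝ ^ 2)⁻¹)).comp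
        ((fderivInnerCLM ℝ (f q, f q)).comp (f'.prod f'))) q :=
    (hasFDerivAt_inv hρ0).comp q h1
  have h3 := h2.smul hf
  rw [(show HasFDerivAt (fun z => (⟪f z, f z⟫_ℝ)⁻¹ • f z) _ q from h3).fderiv]
  simp only [ContinuousLinearMap.add_apply, ContinuousLinearMap.coe_smul',
    Pi.smul_apply, ContinuousLinearMap.smulRight_apply, ContinuousLinearMap.comp_apply,
    ContinuousLinearMap.prod_apply, fderivInnerCLM_apply, ContinuousLinearMap.one_apply,
    ContinuousLinearMap.smul_apply, Pi.mul_apply, smul_eq_mul]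
  rw [real_inner_comm (f' w) (f q)]
  match_scalars <;> (try field_simp) <;> (try ring)

lemma fderiv_inversion {x : E} (hx : x ≠ 0) (v : E) :
    fderiv ℝ (fun y : E => (⟪y, y⟫_ℝ)⁻¹ • y) x v
      = (⟪x, x⟫_ℝ)⁻¹ • v - (2 * (⟪x, x⟫_ℝ)⁻¹ * (⟪x, x⟫_ℝ)⁻¹ * ⟪x, v⟫_ℝ) • x :=
  fderiv_inv_smul (hasFDerivAt_id x) hx v

lemma fderiv_shape {f A : F → E} {f' A' : F →L[ℝ] E} {q : F}
    (hf : HasFDerivAt f f' q) (hA : HasFDerivAt A A' q) (h0 : f q ≠ 0) (w : F) :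
    fderiv ℝ (fun z => (⟪f z, f z⟫_ℝ)⁻¹ • A z
        - (2 * (⟪f z, f z⟫_ℝ)⁻¹ * (⟪f z, f z⟫_ℝ)⁻¹ * ⟪f z, A z⟫_ℝ) • f z) q w
      = (⟪f q, f q⟫_ℝ)⁻¹ • A' w
        - (2 * (⟪f q, f q⟫_ℝ)⁻¹ * (⟪f q, f q⟫_ℝ)⁻¹ * ⟪f q, f' w⟫_ℝ) • A q
        - (2 * (⟪f q, f q⟫_ℝ)⁻¹ * (⟪f q, f q⟫_ℝ)⁻¹ * ⟪f q, A q⟫_ℝ) • f' w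
        - (2 * (⟪f q, f q⟫_ℝ)⁻¹ * (⟪f q, f q⟫_ℝ)⁻¹ * (⟪f q, A' w⟫_ℝ + ⟪f' w, A q⟫_ℝ)
            - 8 * (⟪f q, f q⟫_ℝ)⁻¹ * (⟪f q, f q⟫_ℝ)⁻¹ * (⟪f q, f q⟫_ℝ)⁻¹
              * ⟪f q, f' w⟫_ℝ * ⟪f q, A q⟫_ℝ) • f q := by
  have hρ0 : ⟪f q, f q⟫_ℝ ≠ 0 := inner_self_ne_zero' h0
  have h1 : HasFDerivAt (fun z => ⟪f z, f z⟫_ℝ)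
      ((fderivInnerCLM ℝ (f q, f q)).comp (f'.prod f')) q := hf.inner ℝ hf
  have hinv : HasFDerivAt (fun z => (⟪f z, f z⟫_ℝ)⁻¹)
      ((ContinuousLinearMap.smulRight 1 (-(⟪f q, f q⟫_ℝ ^ 2)⁻¹)).comp
        ((fderivInnerCLM ℝ (f q, f q)).comp (f'.prod f'))) q :=
    (hasFDerivAt_inv hρ0).comp q h1
  have hiA : HasFDerivAt (fun z => ⟪f z, A z⟫_ℝ)
      ((fderivInnerCLM ℝ (f q, A q)).comp (f'.prod A')) q := hf.inner ℝ hA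
  have hs := ((hinv.const_mul (2:ℝ)).mul hinv).mul hiA
  have hG := (hinv.smul hA).sub (hs.smul hf)
  rw [(show HasFDerivAt (fun z => (⟪f z, f z⟫_ℝ)⁻¹ • A z
      - (2 * (⟪f z, f z⟫_ℝ)⁻¹ * (⟪f z, f z⟫_ℝ)⁻¹ * ⟪f z, A z⟫_ℝ) • f z) _ q from hG).fderiv]
  simp only [ContinuousLinearMap.add_apply, ContinuousLinearMap.sub_apply,
    ContinuousLinearMap.coe_smul', Pi.smul_apply, ContinuousLinearMap.smulRight_apply,
    ContinuousLinearMap.comp_apply, ContinuousLinearMap.prod_apply, fderivInnerCLM_apply,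
    ContinuousLinearMap.one_apply, ContinuousLinearMap.smul_apply, Pi.mul_apply, smul_eq_mul]
  rw [real_inner_comm (f' w) (f q)]
  match_scalars <;> (try field_simp) <;> (try ring)

end Aux

set_option maxHeartbeats 2000000 in
/-- Let `f` be a smooth conformal immersion avoiding the origin and
`f̃ = I ∘ f` with `I(x) = x/|x|²` the inversion at the unit sphere.  Then (identifying
the normal bundles via `DI`, more precisely via the isometry `‖f‖² DI(f)`), the mean
curvature vectors satisfy `H_{f̃} = |f|² (H_f + 4 f^⊥ |f|⁻²)`.  In particular, if both
`f` and `f̃` are minimal, then `f^⊥ ≡ 0`. -/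
theorem mean_curvature_under_inversion
    (n : ℕ) (S : Set ℂ) (hS : IsOpen S)
    (f : ℂ → EuclideanSpace ℝ (Fin n)) (hsm : ContDiff ℝ (⊤ : ℕ∞) f)
    (hconf : ∀ p ∈ S,
      ⟪fderiv ℝ f p 1, fderiv ℝ f p Complex.I⟫_ℝ = 0 ∧
      ‖fderiv ℝ f p 1‖ = ‖fderiv ℝ f p Complex.I‖ ∧
      fderiv ℝ f p 1 ≠ 0)
    (h0 : ∀ p ∈ S, f p ≠ 0)
    (ftil : ℂ → EuclideanSpace ℝ (Fin n))
    (hftil : ∀ z, ftil z = (‖f z‖ ^ 2)⁻¹ • f z) :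
    (∀ p ∈ S,
      meanCurv ftil p =
        ‖f p‖ ^ 2 •
          (‖f p‖ ^ 2 •
            (fderiv ℝ (fun x : EuclideanSpace ℝ (Fin n) => (‖x‖ ^ 2)⁻¹ • x) (f p))
              (meanCurv f p + (4 * (‖f p‖ ^ 2)⁻¹) • nproj f p (f p)))) ∧
    ((∀ p ∈ S, meanCurv f p = 0) → (∀ p ∈ S, meanCurv ftil p = 0) →
      ∀ p ∈ S, nproj f p (f p) = 0) := by
  have hdiff : Differentiable ℝ f := hsm.differentiable (by simp)
  have hftE : ftil = fun z => (⟪f z, f z⟫_ℝ)⁻¹ • f z :=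
    funext fun z => by rw [hftil z, real_inner_self_eq_norm_sq]
  have hFw : ∀ w : ℂ, Differentiable ℝ (fun q => fderiv ℝ f q w) := by
    intro w
    have h1 : ContDiff ℝ (⊤ : ℕ∞) (fderiv ℝ f) := hsm.fderiv_right (by simp)
    exact (ContinuousLinearMap.apply ℝ (EuclideanSpace ℝ (Fin n)) w).differentiable.comp
      (h1.differentiable (by simp))
  have hdval : ∀ q, f q ≠ 0 → ∀ w, fderiv ℝ ftil q w =
      (⟪f q, f q⟫_ℝ)⁻¹ • fderiv ℝ f q w
        - (2 * (⟪f q, f q⟫_ℝ)⁻¹ * (⟪f q, f q⟫_ℝ)⁻¹ * ⟪f q, fderiv ℝ f q w⟫_ℝ) • f q := by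
    intro q hq w
    rw [hftE]
    exact fderiv_inv_smul (hdiff q).hasFDerivAt hq w
  have key : ∀ p ∈ S,
      meanCurv ftil p =
        ‖f p‖ ^ 2 •
          (‖f p‖ ^ 2 •
            (fderiv ℝ (fun x : EuclideanSpace ℝ (Fin n) => (‖x‖ ^ 2)⁻¹ • x) (f p))
              (meanCurv f p + (4 * (‖f p‖ ^ 2)⁻¹) • nproj f p (f p))) := by
    intro p hp
    obtain ⟨horth, hnorm, hfx0⟩ := hconf p hp
    have hp0 : f p ≠ 0 := h0 p hp
    -- second derivatives of ftil
    have hlapval : ∀ w : ℂ, fderiv ℝ (fun q => fderiv ℝ ftil q w) p w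
        = (⟪f p, f p⟫_ℝ)⁻¹ • fderiv ℝ (fun q => fderiv ℝ f q w) p w
          - (2 * (⟪f p, f p⟫_ℝ)⁻¹ * (⟪f p, f p⟫_ℝ)⁻¹ * ⟪f p, fderiv ℝ f p w⟫_ℝ)
              • fderiv ℝ f p w
          - (2 * (⟪f p, f p⟫_ℝ)⁻¹ * (⟪f p, f p⟫_ℝ)⁻¹ * ⟪f p, fderiv ℝ f p w⟫_ℝ)
              • fderiv ℝ f p w
          - (2 * (⟪f p, f p⟫_ℝ)⁻¹ * (⟪f p, f p⟫_ℝ)⁻¹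
                * (⟪f p, fderiv ℝ (fun q => fderiv ℝ f q w) p w⟫_ℝ
                    + ⟪fderiv ℝ f p w, fderiv ℝ f p w⟫_ℝ)
              - 8 * (⟪f p, f p⟫_ℝ)⁻¹ * (⟪f p, f p⟫_ℝ)⁻¹ * (⟪f p, f p⟫_ℝ)⁻¹
                * ⟪f p, fderiv ℝ f p w⟫_ℝ * ⟪f p, fderiv ℝ f p w⟫_ℝ) • f p := by
      intro w
      have hU : IsOpen {q : ℂ | f q ≠ 0} := isOpen_compl_singleton.preimage hdiff.continuous
      have hev : (fun q => fderiv ℝ ftil q w) =ᶠ[nhds p]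
          (fun q => (⟪f q, f q⟫_ℝ)⁻¹ • (fun q' => fderiv ℝ f q' w) q
            - (2 * (⟪f q, f q⟫_ℝ)⁻¹ * (⟪f q, f q⟫_ℝ)⁻¹
                * ⟪f q, (fun q' => fderiv ℝ f q' w) q⟫_ℝ) • f q) := by
        filter_upwards [hU.mem_nhds hp0] with q hq
        exact hdval q hq w
      rw [hev.fderiv_eq]
      exact fderiv_shape (hdiff p).hasFDerivAt ((hFw w) p).hasFDerivAt hp0 w
    -- unfold the goal and switch to inner products
    simp only [meanCurv]
    simp only [← real_inner_self_eq_norm_sq]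
    set x := f p with hxd
    set fx := fderiv ℝ f p 1 with hfxd
    set fy := fderiv ℝ f p Complex.I with hfyd
    have hρ0 : ⟪x, x⟫_ℝ ≠ 0 := inner_self_ne_zero' hp0
    have hlam0 : ⟪fx, fx⟫_ℝ ≠ 0 := inner_self_ne_zero' hfx0
    have hyy : ⟪fy, fy⟫_ℝ = ⟪fx, fx⟫_ℝ := by
      rw [real_inner_self_eq_norm_sq, real_inner_self_eq_norm_sq, hnorm]
    -- tangent space membership facts
    have hfxT : fx ∈ tang f p := Submodule.subset_span (Set.mem_insert _ _)
    have hfyT : fy ∈ tang f p :=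
      Submodule.subset_span (Set.mem_insert_iff.mpr (Or.inr rfl))
    have hNort : nproj f p (lap f p) ∈ (tang f p)ᗮ := Submodule.coe_mem _
    have hXort : nproj f p x ∈ (tang f p)ᗮ := Submodule.coe_mem _
    have hfxN : ⟪fx, nproj f p (lap f p)⟫_ℝ = 0 :=
      Submodule.inner_right_of_mem_orthogonal hfxT hNort
    have hfyN : ⟪fy, nproj f p (lap f p)⟫_ℝ = 0 :=
      Submodule.inner_right_of_mem_orthogonal hfyT hNort
    have hfxX : ⟪fx, nproj f p x⟫_ℝ = 0 :=
      Submodule.inner_right_of_mem_orthogonal hfxT hXort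
    have hfyX : ⟪fy, nproj f p x⟫_ℝ = 0 :=
      Submodule.inner_right_of_mem_orthogonal hfyT hXort
    have hΔT : lap f p - nproj f p (lap f p) ∈ tang f p := by
      have h := Submodule.sub_starProjection_mem_orthogonal (K := (tang f p)ᗮ) (lap f p)
      rwa [Submodule.orthogonal_orthogonal] at h
    have hxT : x - nproj f p x ∈ tang f p := by
      have h := Submodule.sub_starProjection_mem_orthogonal (K := (tang f p)ᗮ) x
      rwa [Submodule.orthogonal_orthogonal] at h
    -- first derivatives of ftil at p
    have hd1 : fderiv ℝ ftil p 1
        = (⟪x, x⟫_ℝ)⁻¹ • fx - (2 * (⟪x, x⟫_ℝ)⁻¹ * (⟪x, x⟫_ℝ)⁻¹ * ⟪x, fx⟫_ℝ) • x :=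
      hdval p hp0 1
    have hdI : fderiv ℝ ftil p Complex.I
        = (⟪x, x⟫_ℝ)⁻¹ • fy - (2 * (⟪x, x⟫_ℝ)⁻¹ * (⟪x, x⟫_ℝ)⁻¹ * ⟪x, fy⟫_ℝ) • x :=
      hdval p hp0 Complex.I
    -- the candidate normal projection of lap ftil p
    set z := (⟪x, x⟫_ℝ)⁻¹ • nproj f p (lap f p)
      + (4 * (⟪x, x⟫_ℝ)⁻¹ * (⟪x, x⟫_ℝ)⁻¹ * ⟪fx, fx⟫_ℝ) • nproj f p x with hzd
    set u := z - (2 * (⟪x, x⟫_ℝ)⁻¹ * ⟪x, z⟫_ℝ) • x with hud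
    have hfxz : ⟪fx, z⟫_ℝ = 0 := by
      rw [hzd]
      simp only [inner_add_right, real_inner_smul_right, hfxN, hfxX, mul_zero, add_zero]
    have hfyz : ⟪fy, z⟫_ℝ = 0 := by
      rw [hzd]
      simp only [inner_add_right, real_inner_smul_right, hfyN, hfyX, mul_zero, add_zero]
    have hud1 : ⟪fderiv ℝ ftil p 1, u⟫_ℝ = 0 := by
      rw [hud, hd1]
      simp only [inner_sub_left, inner_sub_right, real_inner_smul_left,
        real_inner_smul_right, hfxz]
      rw [real_inner_comm x fx]
      set r := ⟪x, x⟫_ℝ with hrd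
      set a := ⟪x, fx⟫_ℝ with had
      set bb := ⟪x, z⟫_ℝ with hbd
      field_simp
      ring
    have hudI : ⟪fderiv ℝ ftil p Complex.I, u⟫_ℝ = 0 := by
      rw [hud, hdI]
      simp only [inner_sub_left, inner_sub_right, real_inner_smul_left,
        real_inner_smul_right, hfyz]
      rw [real_inner_comm x fy]
      set r := ⟪x, x⟫_ℝ with hrd
      set a := ⟪x, fy⟫_ℝ with had
      set bb := ⟪x, z⟫_ℝ with hbd
      field_simp
      ring
    have humem : u ∈ (tang ftil p)ᗮ := by
      rw [Submodule.mem_orthogonal]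
      intro v hv
      unfold tang at hv
      rw [Submodule.mem_span_pair] at hv
      obtain ⟨c1, c2, rfl⟩ := hv
      simp only [inner_add_left, real_inner_smul_left, hud1, hudI, mul_zero, add_zero, zero_add]
    -- reflection of the tangent space
    have hRT : ∀ v ∈ tang f p,
        v - (2 * (⟪x, x⟫_ℝ)⁻¹ * ⟪x, v⟫_ℝ) • x ∈ tang ftil p := by
      intro v hv
      refine Submodule.span_induction ?_ ?_ ?_ ?_ hv
      · intro w hw
        simp only [Set.mem_insert_iff, Set.mem_singleton_iff] at hw
        rcases hw with rfl | rfl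
        · have hm : fderiv ℝ ftil p 1 ∈ tang ftil p :=
            Submodule.subset_span (Set.mem_insert _ _)
          have hm2 := Submodule.smul_mem (tang ftil p) (⟪x, x⟫_ℝ) hm
          rw [hd1] at hm2
          have heq : (⟪x, x⟫_ℝ) • ((⟪x, x⟫_ℝ)⁻¹ • fx
              - (2 * (⟪x, x⟫_ℝ)⁻¹ * (⟪x, x⟫_ℝ)⁻¹ * ⟪x, fx⟫_ℝ) • x)
              = fx - (2 * (⟪x, x⟫_ℝ)⁻¹ * ⟪x, fx⟫_ℝ) • x := by
            set r := ⟪x, x⟫_ℝ with hrd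
            set a := ⟪x, fx⟫_ℝ with had
            match_scalars <;> field_simp <;> try ring
          rwa [heq] at hm2
        · have hm : fderiv ℝ ftil p Complex.I ∈ tang ftil p :=
            Submodule.subset_span (Set.mem_insert_iff.mpr (Or.inr rfl))
          have hm2 := Submodule.smul_mem (tang ftil p) (⟪x, x⟫_ℝ) hm
          rw [hdI] at hm2
          have heq : (⟪x, x⟫_ℝ) • ((⟪x, x⟫_ℝ)⁻¹ • fy
              - (2 * (⟪x, x⟫_ℝ)⁻¹ * (⟪x, x⟫_ℝ)⁻¹ * ⟪x, fy⟫_ℝ) • x)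
              = fy - (2 * (⟪x, x⟫_ℝ)⁻¹ * ⟪x, fy⟫_ℝ) • x := by
            set r := ⟪x, x⟫_ℝ with hrd
            set a := ⟪x, fy⟫_ℝ with had
            match_scalars <;> field_simp <;> try ring
          rwa [heq] at hm2
      · simpa using Submodule.zero_mem (tang ftil p)
      · intro a b ha hb iha ihb
        have hsum := Submodule.add_mem (tang ftil p) iha ihb
        have heq : (a + b) - (2 * (⟪x, x⟫_ℝ)⁻¹ * ⟪x, a + b⟫_ℝ) • x
            = (a - (2 * (⟪x, x⟫_ℝ)⁻¹ * ⟪x, a⟫_ℝ) • x)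
              + (b - (2 * (⟪x, x⟫_ℝ)⁻¹ * ⟪x, b⟫_ℝ) • x) := by
          rw [inner_add_right]
          module
        rwa [heq]
      · intro r a ha iha
        have hsm2 := Submodule.smul_mem (tang ftil p) r iha
        have heq : (r • a) - (2 * (⟪x, x⟫_ℝ)⁻¹ * ⟪x, r • a⟫_ℝ) • x
            = r • (a - (2 * (⟪x, x⟫_ℝ)⁻¹ * ⟪x, a⟫_ℝ) • x) := by
          rw [real_inner_smul_right]
          module
        rwa [heq]
    -- membership of lap ftil p - u in tang ftil p
    set m := (⟪x, x⟫_ℝ)⁻¹ • (lap f p - nproj f p (lap f p))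
        - (4 * (⟪x, x⟫_ℝ)⁻¹ * (⟪x, x⟫_ℝ)⁻¹ * ⟪x, fx⟫_ℝ) • fx
        - (4 * (⟪x, x⟫_ℝ)⁻¹ * (⟪x, x⟫_ℝ)⁻¹ * ⟪x, fy⟫_ℝ) • fy
        + (4 * (⟪x, x⟫_ℝ)⁻¹ * (⟪x, x⟫_ℝ)⁻¹ * ⟪fx, fx⟫_ℝ) • (x - nproj f p x) with hmd
    have hmT : m ∈ tang f p := by
      rw [hmd]
      exact Submodule.add_mem _ (Submodule.sub_mem _ (Submodule.sub_mem _
        (Submodule.smul_mem _ _ hΔT) (Submodule.smul_mem _ _ hfxT))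
        (Submodule.smul_mem _ _ hfyT)) (Submodule.smul_mem _ _ hxT)
    have hmem2 := hRT m hmT
    have hmemT : lap ftil p - u ∈ tang ftil p := by
      have heq : lap ftil p - u = m - (2 * (⟪x, x⟫_ℝ)⁻¹ * ⟪x, m⟫_ℝ) • x := by
        have hlapf : lap f p = fderiv ℝ (fun q => fderiv ℝ f q 1) p 1
            + fderiv ℝ (fun q => fderiv ℝ f q Complex.I) p Complex.I := rfl
        show fderiv ℝ (fun q => fderiv ℝ ftil q 1) p 1
            + fderiv ℝ (fun q => fderiv ℝ ftil q Complex.I) p Complex.I - u = _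
        rw [hlapval 1, hlapval Complex.I, hud, hzd, hmd, hlapf]
        simp only [inner_add_right, inner_sub_right, real_inner_smul_right, ← hfxd, ← hfyd, hyy]
        set r := ⟪x, x⟫_ℝ with hrd
        set l := ⟪fx, fx⟫_ℝ with hld
        set a := ⟪x, fx⟫_ℝ with had
        set bb := ⟪x, fy⟫_ℝ with hbd
        set c1 := ⟪x, fderiv ℝ (fun q => fderiv ℝ f q 1) p 1⟫_ℝ with hc1d
        set cI := ⟪x, fderiv ℝ (fun q => fderiv ℝ f q Complex.I) p Complex.I⟫_ℝ with hcId
        set cN := ⟪x, nproj f p (lap f p)⟫_ℝ with hcNd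
        set cX := ⟪x, nproj f p x⟫_ℝ with hcXd
        match_scalars <;> field_simp <;> ring
      rw [heq]
      exact hmem2
    have hproj : nproj ftil p (lap ftil p) = u := by
      unfold nproj
      rw [← Submodule.starProjection_apply]
      refine Submodule.eq_starProjection_of_mem_orthogonal humem ?_
      rw [Submodule.orthogonal_orthogonal]
      exact hmemT
    -- norm of the first derivative of ftil
    have hn1 : ⟪fderiv ℝ ftil p 1, fderiv ℝ ftil p 1⟫_ℝ
        = (⟪x, x⟫_ℝ)⁻¹ * (⟪x, x⟫_ℝ)⁻¹ * ⟪fx, fx⟫_ℝ := by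
      rw [hd1]
      simp only [inner_sub_left, inner_sub_right, real_inner_smul_left,
        real_inner_smul_right]
      rw [real_inner_comm x fx]
      set r := ⟪x, x⟫_ℝ with hrd
      set a := ⟪x, fx⟫_ℝ with had
      set l := ⟪fx, fx⟫_ℝ with hld
      field_simp
      ring
    -- final assembly
    rw [hproj, hn1, fderiv_inversion hp0]
    rw [hud, hzd]
    simp only [inner_add_right, inner_sub_right, real_inner_smul_right]
    set r := ⟪x, x⟫_ℝ with hrd
    set l := ⟪fx, fx⟫_ℝ with hld
    set cN := ⟪x, nproj f p (lap f p)⟫_ℝ with hcNd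
    set cX := ⟪x, nproj f p x⟫_ℝ with hcXd
    match_scalars <;> field_simp <;> ring
  refine ⟨key, ?_⟩
  intro hf0 hft0 p hp
  have hp0 : f p ≠ 0 := h0 p hp
  have hρ0 : ⟪f p, f p⟫_ℝ ≠ 0 := inner_self_ne_zero' hp0
  have hthis := key p hp
  rw [hft0 p hp, hf0 p hp, zero_add] at hthis
  simp only [← real_inner_self_eq_norm_sq] at hthis
  rw [fderiv_inversion hp0] at hthis
  -- take the inner product with f p
  have h4 := congrArg (fun y => ⟪f p, y⟫_ℝ) hthis.symm
  simp only [inner_zero_right, inner_add_right, inner_sub_right,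
    real_inner_smul_right] at h4
  have hxX : ⟪f p, nproj f p (f p)⟫_ℝ = 0 := by
    set r := ⟪f p, f p⟫_ℝ with hrd
    set t := ⟪f p, nproj f p (f p)⟫_ℝ with htd
    field_simp at h4
    have h5 : t * ((-4) * r ^ 5) = 0 := by linear_combination (r ^ 5) * h4
    have h6 : (-4 : ℝ) * r ^ 5 ≠ 0 := mul_ne_zero (by norm_num) (pow_ne_zero _ hρ0)
    exact (mul_eq_zero.mp h5).resolve_right h6
  -- now conclude nproj f p (f p) = 0
  have hXX : ⟪f p - nproj f p (f p), nproj f p (f p)⟫_ℝ = 0 := by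
    have hsub : f p - nproj f p (f p) ∈ tang f p := by
      have h := Submodule.sub_starProjection_mem_orthogonal (K := (tang f p)ᗮ) (f p)
      rwa [Submodule.orthogonal_orthogonal] at h
    exact Submodule.inner_right_of_mem_orthogonal hsub (Submodule.coe_mem _)
  rw [inner_sub_left, hxX] at hXX
  have : ⟪nproj f p (f p), nproj f p (f p)⟫_ℝ = 0 := by linarith
  exact inner_self_eq_zero.mp this
end
end
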